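/- Let ε' > 0 and 0 < δ' < 1. If U ~ Lap(4/ε') and V ~ Lap(2/ε') are independent Laplace random variables centered at 0, then P( U > (4/ε') log(1/δ') + V ) < δ'. -/

import Mathlib

/-!
With `b = 4/ε'` the tail of `U` satisfies `P(U > t) ≤ e^{-t/b}/2` for every real `t`, so the
probability is at most `(δ'/2) E[e^{-V/b}]`. The moment generating function of `Lap(b/2)` at
`-1/b` is `4/3`, which gives the bound `2δ'/3 < δ'`.
-/

open MeasureTheory Real Set

noncomputable def laplacePDFReal (b x : ℝ) : ℝ := exp (-|x| / b) / (2 * b)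

section Laplace

variable {b : ℝ}

lemma laplacePDFReal_nonneg (hb : 0 < b) (x : ℝ) : 0 ≤ laplacePDFReal b x := by
  unfold laplacePDFReal; positivity

lemma laplacePDFReal_le_exp (hb : 0 < b) (x : ℝ) :
    laplacePDFReal b x ≤ exp (-b⁻¹ * x) / (2 * b) := by
  unfold laplacePDFReal
  gcongr
  rw [div_eq_inv_mul, mul_neg, neg_mul]
  exact neg_le_neg (mul_le_mul_of_nonneg_left (le_abs_self x) (inv_nonneg.2 hb.le))

lemma integral_laplacePDFReal_Ioi_le (hb : 0 < b) (t : ℝ) :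
    ∫ x in Ioi t, laplacePDFReal b x ≤ exp (-b⁻¹ * t) / 2 := by
  have hrate : -b⁻¹ < 0 := neg_lt_zero.2 (inv_pos.2 hb)
  calc ∫ x in Ioi t, laplacePDFReal b x
      ≤ ∫ x in Ioi t, exp (-b⁻¹ * x) / (2 * b) :=
        integral_mono_of_nonneg (.of_forall (laplacePDFReal_nonneg hb))
          ((integrableOn_exp_mul_Ioi hrate t).div_const _)
          (.of_forall (laplacePDFReal_le_exp hb))
    _ = exp (-b⁻¹ * t) / 2 := by
        rw [integral_div, integral_exp_mul_Ioi hrate]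
        field_simp

lemma laplacePDFReal_mul_exp_of_nonpos (s : ℝ) {x : ℝ} (hx : x ≤ 0) :
    laplacePDFReal b x * exp (s * x) = exp ((b⁻¹ + s) * x) / (2 * b) := by
  rw [laplacePDFReal, abs_of_nonpos hx, div_mul_eq_mul_div, ← exp_add]
  ring_nf

lemma laplacePDFReal_mul_exp_of_pos (s : ℝ) {x : ℝ} (hx : 0 < x) :
    laplacePDFReal b x * exp (s * x) = exp ((s - b⁻¹) * x) / (2 * b) := by
  rw [laplacePDFReal, abs_of_pos hx, div_mul_eq_mul_div, ← exp_add]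
  ring_nf

variable {s : ℝ}

lemma integrableOn_laplacePDFReal_mul_exp_Iic (hs : |s| < b⁻¹) :
    IntegrableOn (fun x ↦ laplacePDFReal b x * exp (s * x)) (Iic 0) :=
  IntegrableOn.congr_fun
    ((integrableOn_exp_mul_Iic (a := b⁻¹ + s) (by linarith [neg_abs_le s]) 0).div_const _)
    (fun _ hx ↦ (laplacePDFReal_mul_exp_of_nonpos s hx).symm) measurableSet_Iic

lemma integrableOn_laplacePDFReal_mul_exp_Ioi (hs : |s| < b⁻¹) :
    IntegrableOn (fun x ↦ laplacePDFReal b x * exp (s * x)) (Ioi 0) :=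
  IntegrableOn.congr_fun
    ((integrableOn_exp_mul_Ioi (a := s - b⁻¹) (by linarith [le_abs_self s]) 0).div_const _)
    (fun _ hx ↦ (laplacePDFReal_mul_exp_of_pos s hx).symm) measurableSet_Ioi

lemma integrable_laplacePDFReal_mul_exp (hs : |s| < b⁻¹) :
    Integrable (fun x ↦ laplacePDFReal b x * exp (s * x)) := by
  rw [← integrableOn_univ, ← Iic_union_Ioi (a := (0 : ℝ))]
  exact (integrableOn_laplacePDFReal_mul_exp_Iic hs).union
    (integrableOn_laplacePDFReal_mul_exp_Ioi hs)

lemma integral_laplacePDFReal_mul_exp (hb : 0 < b) (hs : |s| < b⁻¹) :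
    ∫ x, laplacePDFReal b x * exp (s * x) = (1 - (b * s) ^ 2)⁻¹ := by
  have hleft : 0 < b⁻¹ + s := by linarith [neg_abs_le s]
  have hright : s - b⁻¹ < 0 := by linarith [le_abs_self s]
  rw [← intervalIntegral.integral_Iic_add_Ioi (integrableOn_laplacePDFReal_mul_exp_Iic hs)
      (integrableOn_laplacePDFReal_mul_exp_Ioi hs),
    setIntegral_congr_fun measurableSet_Iic (fun _ hx ↦ laplacePDFReal_mul_exp_of_nonpos s hx),
    setIntegral_congr_fun measurableSet_Ioi (fun _ hx ↦ laplacePDFReal_mul_exp_of_pos s hx),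
    integral_div, integral_div, integral_exp_mul_Iic hleft, integral_exp_mul_Ioi hright]
  have e1 : b⁻¹ + s = (1 + b * s) / b := by field_simp
  have e2 : s - b⁻¹ = -((1 - b * s) / b) := by field_simp; ring
  rw [e1] at hleft
  rw [e2, neg_lt_zero] at hright
  have h1 := (div_pos_iff_of_pos_right hb).1 hleft
  have h2 := (div_pos_iff_of_pos_right hb).1 hright
  rw [e1, e2, show 1 - (b * s) ^ 2 = (1 + b * s) * (1 - b * s) by ring]
  simp only [mul_zero, exp_zero]
  field_simp
  ring

lemma integral_laplacePDFReal_half_mul_tail_le (hb : 0 < b) (T : ℝ) :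
    ∫ v, laplacePDFReal (b / 2) v * ∫ u in Ioi (T + v), laplacePDFReal b u
      ≤ 2 / 3 * exp (-b⁻¹ * T) := by
  have hs : |-b⁻¹| < (b / 2)⁻¹ := by
    rw [abs_neg, abs_of_pos (inv_pos.2 hb)]
    exact (inv_lt_inv₀ hb (half_pos hb)).2 (half_lt_self hb)
  have htail (v : ℝ) : laplacePDFReal (b / 2) v * ∫ u in Ioi (T + v), laplacePDFReal b u
      ≤ exp (-b⁻¹ * T) / 2 * (laplacePDFReal (b / 2) v * exp (-b⁻¹ * v)) :=
    calc _ ≤ laplacePDFReal (b / 2) v * (exp (-b⁻¹ * (T + v)) / 2) :=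
          mul_le_mul_of_nonneg_left (integral_laplacePDFReal_Ioi_le hb _)
            (laplacePDFReal_nonneg (half_pos hb) v)
      _ = _ := by rw [mul_add, exp_add]; ring
  calc _ ≤ ∫ v, exp (-b⁻¹ * T) / 2 * (laplacePDFReal (b / 2) v * exp (-b⁻¹ * v)) :=
        integral_mono_of_nonneg
          (.of_forall fun v ↦ mul_nonneg (laplacePDFReal_nonneg (half_pos hb) v)
            (setIntegral_nonneg measurableSet_Ioi fun u _ ↦ laplacePDFReal_nonneg hb u))
          ((integrable_laplacePDFReal_mul_exp hs).const_mul _) (.of_forall htail)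
    _ = 2 / 3 * exp (-b⁻¹ * T) := by
        rw [integral_const_mul, integral_laplacePDFReal_mul_exp (half_pos hb) hs]
        field_simp
        norm_num

end Laplace

theorem stmt_3_general (ε' δ' : ℝ) (hε : 0 < ε') (hδ0 : 0 < δ') :
    (∫ v : ℝ, (ε' / 4) * Real.exp (-|v| * ε' / 2) *
      (∫ u in Set.Ioi ((4 / ε') * Real.log (1 / δ') + v),
        (ε' / 8) * Real.exp (-|u| * ε' / 4))) < δ' := by
  have hb : 0 < 4 / ε' := by positivity
  have hV (v : ℝ) : ε' / 4 * exp (-|v| * ε' / 2) = laplacePDFReal (4 / ε' / 2) v := by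
    rw [laplacePDFReal]
    field_simp
    ring_nf
  have hU (u : ℝ) : ε' / 8 * exp (-|u| * ε' / 4) = laplacePDFReal (4 / ε') u := by
    rw [laplacePDFReal]
    field_simp
    norm_num
  have hδ : exp (-(4 / ε')⁻¹ * (4 / ε' * log (1 / δ'))) = δ' := by
    rw [neg_mul, inv_mul_cancel_left₀ hb.ne', one_div, log_inv, neg_neg, exp_log hδ0]
  simp_rw [hV, hU]
  calc _ ≤ 2 / 3 * exp (-(4 / ε')⁻¹ * (4 / ε' * log (1 / δ'))) :=
        integral_laplacePDFReal_half_mul_tail_le hb _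
    _ < δ' := by rw [hδ]; linarith

/-- If `U ~ Lap(4/ε')` and `V ~ Lap(2/ε')` are independent centered Laplace random variables,
then `P(U > (4/ε') log(1/δ') + V) < δ'`, expressed via the Laplace densities. -/
theorem stmt_3 (ε' δ' : ℝ) (hε : 0 < ε') (hδ0 : 0 < δ') (hδ1 : δ' < 1) :
    (∫ v : ℝ, (ε' / 4) * Real.exp (-|v| * ε' / 2) *
      (∫ u in Set.Ioi ((4 / ε') * Real.log (1 / δ') + v),
        (ε' / 8) * Real.exp (-|u| * ε' / 4))) < δ' :=
  stmt_3_general ε' δ' hε hδ0
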